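/- arXiv:2207.05846 — 7 statements merged into one kernel-verified Lean document; each statement's English description precedes it below -/
import Mathlib

section
/- Let p : [0,1] → [0,1] be strictly increasing and continuous, and let c ∈ [0,1] be a constant (representing β·q(y)·x_vu with x_n fixed). Then there exists a unique P ∈ [0,1] satisfying P = p(x_n + (1 - P·c)·x_vu), for any fixed x_n, x_vu ≥ 0 with x_n + x_vu ≤ 1. -/
open Set Function

/-! Since `c, x_vu ≥ 0`, the argument `x_n + (1 - P c) x_vu` decreases in `P`, so composing with the
increasing `p` gives a continuous antitone self-map of `[0, 1]`. Such a map has a fixed point by the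
intermediate value theorem, and at most one: if `x < y` were both fixed, then `x = g x ≥ g y = y`. -/

theorem AntitoneOn.eq_of_isFixedPt {α : Type*} [LinearOrder α] {g : α → α} {s : Set α}
    (hg : AntitoneOn g s) {x y : α} (hx : x ∈ s) (hy : y ∈ s)
    (hgx : IsFixedPt g x) (hgy : IsFixedPt g y) : x = y := by
  rcases le_total x y with hxy | hyx
  · exact le_antisymm hxy (by simpa only [hgx.eq, hgy.eq] using hg hx hy hxy)
  · exact le_antisymm (by simpa only [hgx.eq, hgy.eq] using hg hy hx hyx) hyx

theorem AntitoneOn.existsUnique_mem_Icc_isFixedPt {α : Type*} [ConditionallyCompleteLinearOrder α]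
    [TopologicalSpace α] [OrderTopology α] [DenselyOrdered α] {g : α → α} {a b : α} (hab : a ≤ b)
    (hcont : ContinuousOn g (Icc a b)) (hmaps : MapsTo g (Icc a b) (Icc a b))
    (hanti : AntitoneOn g (Icc a b)) : ∃! x, x ∈ Icc a b ∧ IsFixedPt g x := by
  obtain ⟨x, hx, hgx⟩ := exists_mem_Icc_isFixedPt_of_mapsTo hcont hab hmaps
  exact ⟨x, ⟨hx, hgx⟩, fun y ⟨hy, hgy⟩ => hanti.eq_of_isFixedPt hy hx hgy hgx⟩

theorem antitone_add_one_sub_mul_mul {xn xvu c : ℝ} (hc : 0 ≤ c) (hxvu : 0 ≤ xvu) :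
    Antitone fun P : ℝ => xn + (1 - P * c) * xvu := by
  intro P Q hPQ
  have : P * c ≤ Q * c := mul_le_mul_of_nonneg_right hPQ hc
  dsimp only
  nlinarith

theorem mapsTo_Icc_add_one_sub_mul_mul {xn xvu c : ℝ} (hc : c ∈ Icc (0 : ℝ) 1) (hxn : 0 ≤ xn)
    (hxvu : 0 ≤ xvu) (hsum : xn + xvu ≤ 1) :
    MapsTo (fun P : ℝ => xn + (1 - P * c) * xvu) (Icc 0 1) (Icc 0 1) := by
  rintro P ⟨hP0, hP1⟩
  have hPc0 : 0 ≤ P * c := mul_nonneg hP0 hc.1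
  have hPc1 : P * c ≤ 1 := mul_le_one₀ hP1 hc.1 hc.2
  constructor <;> dsimp only <;> nlinarith

/-- Existence and uniqueness of the equilibrium accident probability `P`
satisfying the consistency condition `P = p (x_n + (1 - P*c) * x_vu)`. -/
theorem stmt0
    (p : ℝ → ℝ)
    (hmono : StrictMonoOn p (Icc 0 1))
    (hcont : ContinuousOn p (Icc 0 1))
    (hmap : ∀ d ∈ Icc (0:ℝ) 1, p d ∈ Icc (0:ℝ) 1)
    (c : ℝ) (hc : c ∈ Icc (0:ℝ) 1)
    (xn xvu : ℝ) (hxn : 0 ≤ xn) (hxvu : 0 ≤ xvu) (hsum : xn + xvu ≤ 1) :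
    ∃! P : ℝ, P ∈ Icc (0:ℝ) 1 ∧ P = p (xn + (1 - P * c) * xvu) := by
  set arg : ℝ → ℝ := fun P => xn + (1 - P * c) * xvu
  have harg_maps : MapsTo arg (Icc 0 1) (Icc 0 1) :=
    mapsTo_Icc_add_one_sub_mul_mul hc hxn hxvu hsum
  have harg_anti : Antitone arg := antitone_add_one_sub_mul_mul hc.1 hxvu
  have hcont_comp : ContinuousOn (p ∘ arg) (Icc 0 1) :=
    hcont.comp (by fun_prop) harg_maps
  have hanti_comp : AntitoneOn (p ∘ arg) (Icc 0 1) := fun P hP Q hQ hPQ =>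
    hmono.monotoneOn (harg_maps hQ) (harg_maps hP) (harg_anti hPQ)
  have := AntitoneOn.existsUnique_mem_Icc_isFixedPt zero_le_one hcont_comp
    (fun P hP => hmap _ (harg_maps hP)) hanti_comp
  simpa only [IsFixedPt, Function.comp_apply, eq_comm] using this
end

section
/- Let p : [0,1] → (0,1) be strictly increasing and continuous, r > 1, s = β·q(y) ∈ [0,1], y ∈ [0,1]. Suppose p(1 - (s/(1+r))·y) < 1/(1+r) (regime R1). Then the unique P solving P = p(1 - P·s·y) satisfies P < 1/(1+r). -/
open Set

/-! If `P ≥ 1/(1+r)`, then `P = p (1 - P s y) ≤ p (1 - s y/(1+r)) < 1/(1+r)`, since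
`P ↦ p (1 - P s y)` is antitone on `[0, 1]`. -/

theorem lt_of_antitoneOn_of_apply_eq_self_of_apply_lt {α : Type*} [LinearOrder α]
    {F : α → α} {S : Set α} (hF : AntitoneOn F S) {x t : α} (hx : x ∈ S) (ht : t ∈ S)
    (hfix : F x = x) (hlt : F t < t) : x < t := by
  by_contra! h
  have : x ≤ F t := hfix ▸ hF ht hx h
  exact (this.trans_lt hlt).not_ge h

theorem mapsTo_one_sub_mul_Icc {c : ℝ} (hc : c ∈ Icc (0 : ℝ) 1) :
    MapsTo (fun x => 1 - x * c) (Icc 0 1) (Icc 0 1) := by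
  intro x ⟨hx0, hx1⟩
  have : x * c ≤ 1 := mul_le_one₀ hx1 hc.1 hc.2
  exact ⟨by linarith, by nlinarith [hc.1]⟩

theorem antitone_one_sub_mul {c : ℝ} (hc : 0 ≤ c) : Antitone (fun x : ℝ => 1 - x * c) :=
  fun _ _ hxy => by dsimp only; nlinarith

theorem antitoneOn_comp_one_sub_mul {p : ℝ → ℝ} (hp : MonotoneOn p (Icc 0 1)) {c : ℝ}
    (hc : c ∈ Icc (0 : ℝ) 1) : AntitoneOn (fun x => p (1 - x * c)) (Icc 0 1) :=
  hp.comp_AntitoneOn ((antitone_one_sub_mul hc.1).antitoneOn _) (mapsTo_one_sub_mul_Icc hc)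

theorem stmt8_general
    (p : ℝ → ℝ)
    (hmono : StrictMonoOn p (Icc 0 1))
    (r y s : ℝ) (hr : 1 < r) (hy : y ∈ Icc (0:ℝ) 1) (hs : s ∈ Icc (0:ℝ) 1)
    (hR1 : p (1 - s / (1 + r) * y) < 1 / (1 + r))
    (P : ℝ) (hP : P ∈ Icc (0:ℝ) 1) (hPeq : P = p (1 - P * s * y)) :
    P < 1 / (1 + r) := by
  have hsy : s * y ∈ Icc (0 : ℝ) 1 := ⟨mul_nonneg hs.1 hy.1, mul_le_one₀ hs.2 hy.1 hy.2⟩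
  have hthreshold : 1 / (1 + r) ∈ Icc (0 : ℝ) 1 :=
    ⟨by positivity, (div_le_one (by linarith)).2 (by linarith)⟩
  refine lt_of_antitoneOn_of_apply_eq_self_of_apply_lt
    (antitoneOn_comp_one_sub_mul hmono.monotoneOn hsy) hP hthreshold ?_ ?_
  · simpa only [mul_assoc] using hPeq.symm
  · show p (1 - 1 / (1 + r) * (s * y)) < 1 / (1 + r)
    rwa [show 1 / (1 + r) * (s * y) = s / (1 + r) * y by ring]

/-- In regime (R1), the all-reckless equilibrium accident probability
(the solution of `P = p (1 - P*s*y)`) satisfies `P < 1/(1+r)`. -/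
theorem stmt8
    (p : ℝ → ℝ)
    (hmono : StrictMonoOn p (Icc 0 1))
    (hcont : ContinuousOn p (Icc 0 1))
    (hmap : ∀ d ∈ Icc (0:ℝ) 1, p d ∈ Ioo (0:ℝ) 1)
    (r y s : ℝ) (hr : 1 < r) (hy : y ∈ Icc (0:ℝ) 1) (hs : s ∈ Icc (0:ℝ) 1)
    (hR1 : p (1 - s / (1 + r) * y) < 1 / (1 + r))
    (P : ℝ) (hP : P ∈ Icc (0:ℝ) 1) (hPeq : P = p (1 - P * s * y)) :
    P < 1 / (1 + r) :=
  stmt8_general p hmono r y s hr hy hs hR1 P hP hPeq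
end

section
/- Let p : [0,1] → (0,1) be strictly increasing and continuous, r > 1, s = β·q(y) ∈ [0,1], y ∈ [0,1]. Suppose p(0) > 1/(1 + r(1-s)) (regime R3). Then the equilibrium accident probability is P = p(0); i.e., the profile x = (0, 0, 0) satisfies the consistency equation with P = p(0), and p(0) > 1/(1+r) so that the best-response condition for all drivers being careful holds. -/
open Set

lemma one_div_one_add_le_one_div_one_add_mul_one_sub {r s : ℝ} (hr : 0 ≤ r) (hs : s ∈ Icc 0 1) :
    1 / (1 + r) ≤ 1 / (1 + r * (1 - s)) := by
  have hpos : 0 ≤ r * (1 - s) := mul_nonneg hr (sub_nonneg.2 hs.2)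
  have hle : r * (1 - s) ≤ r := mul_le_of_le_one_right hr (by linarith [hs.1])
  exact one_div_le_one_div_of_le (by linarith) (by linarith)

theorem stmt9_general
    (p : ℝ → ℝ)
    (r s : ℝ) (hr : 1 < r) (hs : s ∈ Icc (0:ℝ) 1)
    (hR3 : 1 / (1 + r * (1 - s)) < p 0) :
    p 0 = p (0 + (1 - p 0 * s) * 0) ∧ 1 / (1 + r) < p 0 :=
  ⟨by rw [mul_zero, add_zero],
    (one_div_one_add_le_one_div_one_add_mul_one_sub (by linarith) hs).trans_lt hR3⟩

/-- In regime (R3), the all-careful profile `(0,(0,0))` is consistent with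
accident probability `P = p 0`, and `p 0 > 1/(1+r)` so all drivers being
careful is a best response. -/
theorem stmt9
    (p : ℝ → ℝ)
    (hmono : StrictMonoOn p (Icc 0 1))
    (hcont : ContinuousOn p (Icc 0 1))
    (hmap : ∀ d ∈ Icc (0:ℝ) 1, p d ∈ Ioo (0:ℝ) 1)
    (r y s : ℝ) (hr : 1 < r) (hy : y ∈ Icc (0:ℝ) 1) (hs : s ∈ Icc (0:ℝ) 1)
    (hR3 : 1 / (1 + r * (1 - s)) < p 0) :
    p 0 = p (0 + (1 - p 0 * s) * 0) ∧ 1 / (1 + r) < p 0 :=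
  stmt9_general p r s hr hs hR3
end

section
/- Let p : [0,1] → (0,1) be strictly increasing and continuous, r > 1, s = β·q(y) ∈ (0,1], y ∈ (0,1]. Suppose p(0) ≤ 1/(1 + r(1-s)) ≤ p((1 - s/(1 + r(1-s)))·y) (regime R4). Let P* = 1/(1 + r(1-s)) and x_vu* = p⁻¹(P*)/(1 - P*·s). Then 0 ≤ x_vu* ≤ y, and the profile (0, x_vu*, 0) satisfies the consistency equation P* = p(0 + (1 - P*·s)·x_vu*). -/
open Set

/-!
Since `r > 0` and `s ≤ 1`, the factor `1 - P* s = 1 - s / (1 + r(1 - s))` lies in `[0, 1]`, so the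
upper end `(1 - P* s) y` of regime R4 lies in `[0, 1]`. The intermediate value theorem on
`[0, (1 - P* s) y]` yields `d` with `p d = P*`, and `x_vu* = d / (1 - P* s)` lies in `[0, y]`.
Dividing by `1 - P* s` and multiplying back returns `d`; at `s = 1` the factor vanishes, but then
the interval collapses to `{0}` and `d = 0`, so this holds there too.
-/

lemma one_sub_div_one_add_mul_mem_Icc {r s : ℝ} (hr : 0 ≤ r) (hs0 : 0 ≤ s) (hs1 : s ≤ 1) :
    1 - s / (1 + r * (1 - s)) ∈ Icc (0 : ℝ) 1 := by
  have hA : 1 ≤ 1 + r * (1 - s) := le_add_of_nonneg_right (mul_nonneg hr (sub_nonneg.2 hs1))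
  have hsA : s / (1 + r * (1 - s)) ≤ s := div_le_self hs0 hA
  have hsA0 : 0 ≤ s / (1 + r * (1 - s)) := div_nonneg hs0 (zero_le_one.trans hA)
  constructor <;> linarith

lemma div_mem_Icc_of_mem_Icc_mul {k d y : ℝ} (hk : 0 ≤ k) (hy : 0 ≤ y) (hd : d ∈ Icc 0 (k * y)) :
    d / k ∈ Icc 0 y :=
  ⟨div_nonneg hd.1 hk, div_le_of_le_mul₀ hk hy (by rw [mul_comm]; exact hd.2)⟩

lemma mul_div_cancel_of_mem_Icc_mul {k d y : ℝ} (hd : d ∈ Icc 0 (k * y)) : k * (d / k) = d :=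
  mul_div_cancel_of_imp' fun hk => le_antisymm (by simpa [hk] using hd.2) hd.1

theorem stmt10_general
    (p : ℝ → ℝ)
    (hcont : ContinuousOn p (Icc 0 1))
    (r y s : ℝ) (hr : 1 < r) (hy : y ∈ Ioc (0:ℝ) 1) (hs : s ∈ Ioc (0:ℝ) 1)
    (hR4 : p 0 ≤ 1 / (1 + r * (1 - s)) ∧
      1 / (1 + r * (1 - s)) ≤ p ((1 - s / (1 + r * (1 - s))) * y)) :
    ∃ d ∈ Icc (0:ℝ) 1, p d = 1 / (1 + r * (1 - s)) ∧
      0 ≤ d / (1 - (1 / (1 + r * (1 - s))) * s) ∧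
      d / (1 - (1 / (1 + r * (1 - s))) * s) ≤ y ∧
      1 / (1 + r * (1 - s)) =
        p (0 + (1 - (1 / (1 + r * (1 - s))) * s) *
          (d / (1 - (1 / (1 + r * (1 - s))) * s))) := by
  simp only [one_div_mul_eq_div, zero_add]
  set k := 1 - s / (1 + r * (1 - s))
  have hk : k ∈ Icc (0 : ℝ) 1 := one_sub_div_one_add_mul_mem_Icc (by linarith) hs.1.le hs.2
  have hky : k * y ∈ Icc (0 : ℝ) 1 := unitInterval.mul_mem hk (Ioc_subset_Icc_self hy)
  have hsub : Icc 0 (k * y) ⊆ Icc (0 : ℝ) 1 := Icc_subset_Icc le_rfl hky.2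
  obtain ⟨d, hd, hpd⟩ := intermediate_value_Icc hky.1 (hcont.mono hsub) hR4
  have hx := div_mem_Icc_of_mem_Icc_mul hk.1 hy.1.le hd
  exact ⟨d, hsub hd, hpd, hx.1, hx.2, by rw [mul_div_cancel_of_mem_Icc_mul hd, hpd]⟩

/-- In regime (R4) with `P* = 1/(1 + r(1-s))`, there is a preimage `d = p⁻¹(P*)`,
and the mixing mass `x_vu* = d / (1 - P* s)` lies in `[0, y]` and satisfies
the consistency equation `P* = p (0 + (1 - P* s) * x_vu*)`. -/
theorem stmt10
    (p : ℝ → ℝ)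
    (hmono : StrictMonoOn p (Icc 0 1))
    (hcont : ContinuousOn p (Icc 0 1))
    (hmap : ∀ d ∈ Icc (0:ℝ) 1, p d ∈ Ioo (0:ℝ) 1)
    (r y s : ℝ) (hr : 1 < r) (hy : y ∈ Ioc (0:ℝ) 1) (hs : s ∈ Ioc (0:ℝ) 1)
    (hR4 : p 0 ≤ 1 / (1 + r * (1 - s)) ∧
      1 / (1 + r * (1 - s)) ≤ p ((1 - s / (1 + r * (1 - s))) * y)) :
    ∃ d ∈ Icc (0:ℝ) 1, p d = 1 / (1 + r * (1 - s)) ∧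
      0 ≤ d / (1 - (1 / (1 + r * (1 - s))) * s) ∧
      d / (1 - (1 / (1 + r * (1 - s))) * s) ≤ y ∧
      1 / (1 + r * (1 - s)) =
        p (0 + (1 - (1 / (1 + r * (1 - s))) * s) *
          (d / (1 - (1 / (1 + r * (1 - s))) * s))) :=
  stmt10_general p hcont r y s hr hy hs hR4
end

section
/- Let p : [0,1] → (0,1) be strictly increasing and continuous, r > 1, y ∈ [0,1], and suppose β·q(y) = 0 (no signaling). If x = (x_n, x_vu, 0) is a signaling equilibrium with 0 < x_n < 1-y (non-V2V drivers mixing), then p(x_n + x_vu) = 1/(1+r). Consequently, any two signaling equilibria x¹, x² with β·q(y) = 0 and interior mixing satisfy x_n¹ + x_vu¹ = x_n² + x_vu², and have equal accident probabilities. -/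
open Set

theorem eq_one_div_one_add_of_one_sub_eq_mul {P r : ℝ} (h : 1 - P = r * P) :
    P = 1 / (1 + r) :=
  eq_one_div_of_mul_eq_one_right (by linear_combination -h)

theorem eq_one_div_one_add_of_mixing {P r x c : ℝ} (hmix : 0 < x ∧ x < c)
    (hC : x < c → 1 - P ≤ r * P) (hR : 0 < x → r * P ≤ 1 - P) :
    P = 1 / (1 + r) :=
  eq_one_div_one_add_of_one_sub_eq_mul (le_antisymm (hC hmix.2) (hR hmix.1))

theorem stmt11_general
    (p : ℝ → ℝ)
    (hmono : StrictMonoOn p (Icc 0 1))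
    (r y : ℝ)
    (xn₁ xvu₁ xn₂ xvu₂ : ℝ)
    (hsum₁ : xn₁ + xvu₁ ∈ Icc (0:ℝ) 1) (hsum₂ : xn₂ + xvu₂ ∈ Icc (0:ℝ) 1)
    -- non-V2V drivers mix in both profiles
    (hmix₁ : 0 < xn₁ ∧ xn₁ < 1 - y) (hmix₂ : 0 < xn₂ ∧ xn₂ < 1 - y)
    -- Nash conditions for non-V2V drivers (careful cost `1 - P`, reckless cost `r P`)
    (hne₁C : xn₁ < 1 - y → 1 - p (xn₁ + xvu₁) ≤ r * p (xn₁ + xvu₁))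
    (hne₁R : 0 < xn₁ → r * p (xn₁ + xvu₁) ≤ 1 - p (xn₁ + xvu₁))
    (hne₂C : xn₂ < 1 - y → 1 - p (xn₂ + xvu₂) ≤ r * p (xn₂ + xvu₂))
    (hne₂R : 0 < xn₂ → r * p (xn₂ + xvu₂) ≤ 1 - p (xn₂ + xvu₂)) :
    p (xn₁ + xvu₁) = 1 / (1 + r) ∧
      xn₁ + xvu₁ = xn₂ + xvu₂ ∧
      p (xn₁ + xvu₁) = p (xn₂ + xvu₂) := by
  have hp₁ := eq_one_div_one_add_of_mixing hmix₁ hne₁C hne₁R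
  have hp₂ := eq_one_div_one_add_of_mixing hmix₂ hne₂C hne₂R
  have hpe : p (xn₁ + xvu₁) = p (xn₂ + xvu₂) := hp₁.trans hp₂.symm
  exact ⟨hp₁, hmono.injOn hsum₁ hsum₂ hpe, hpe⟩

/-- With no signaling (`β q(y) = 0`), a signaling equilibrium in which non-V2V
drivers mix (`0 < x_n < 1 - y`) has accident probability `p(x_n + x_vu) = 1/(1+r)`;
consequently any two such equilibria have the same total reckless mass and the
same accident probability. -/
theorem stmt11
    (p : ℝ → ℝ)
    (hmono : StrictMonoOn p (Icc 0 1))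
    (hcont : ContinuousOn p (Icc 0 1))
    (hmap : ∀ d ∈ Icc (0:ℝ) 1, p d ∈ Ioo (0:ℝ) 1)
    (r y β qy : ℝ) (hr : 1 < r) (hy : y ∈ Icc (0:ℝ) 1)
    (hnosig : β * qy = 0)
    (xn₁ xvu₁ xn₂ xvu₂ : ℝ)
    (hxvu₁ : xvu₁ ∈ Icc (0:ℝ) y) (hxvu₂ : xvu₂ ∈ Icc (0:ℝ) y)
    (hsum₁ : xn₁ + xvu₁ ∈ Icc (0:ℝ) 1) (hsum₂ : xn₂ + xvu₂ ∈ Icc (0:ℝ) 1)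
    -- non-V2V drivers mix in both profiles
    (hmix₁ : 0 < xn₁ ∧ xn₁ < 1 - y) (hmix₂ : 0 < xn₂ ∧ xn₂ < 1 - y)
    -- Nash conditions for non-V2V drivers (careful cost `1 - P`, reckless cost `r P`)
    (hne₁C : xn₁ < 1 - y → 1 - p (xn₁ + xvu₁) ≤ r * p (xn₁ + xvu₁))
    (hne₁R : 0 < xn₁ → r * p (xn₁ + xvu₁) ≤ 1 - p (xn₁ + xvu₁))
    (hne₂C : xn₂ < 1 - y → 1 - p (xn₂ + xvu₂) ≤ r * p (xn₂ + xvu₂))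
    (hne₂R : 0 < xn₂ → r * p (xn₂ + xvu₂) ≤ 1 - p (xn₂ + xvu₂)) :
    p (xn₁ + xvu₁) = 1 / (1 + r) ∧
      xn₁ + xvu₁ = xn₂ + xvu₂ ∧
      p (xn₁ + xvu₁) = p (xn₂ + xvu₂) :=
  stmt11_general p hmono r y xn₁ xvu₁ xn₂ xvu₂ hsum₁ hsum₂ hmix₁ hmix₂ hne₁C hne₁R hne₂C hne₂R
end

section
/- Fix r > 1, y ∈ (0,1], q(y) ∈ (0,1], and a strictly increasing continuous p : [0,1] → (0,1). For β ∈ [0,1], let P(β) denote the unique solution of P = p((1 - P·β·q(y))·y) (the consistency equation for the profile (0, y, 0)). Then P is strictly decreasing in β. -/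
open Set

lemma one_sub_mul_mul_mul_mem_unitInterval {P β q y : ℝ} (hP : P ∈ unitInterval)
    (hβ : β ∈ unitInterval) (hq : q ∈ unitInterval) (hy : y ∈ unitInterval) :
    (1 - P * β * q) * y ∈ unitInterval :=
  unitInterval.mul_mem (Icc.mem_iff_one_sub_mem.mp (unitInterval.mul_mem
    (unitInterval.mul_mem hP hβ) hq)) hy

lemma one_sub_mul_mul_mul_lt {P₁ P₂ β₁ β₂ q y : ℝ} (hq : 0 < q) (hy : 0 < y)
    (hP : P₁ ≤ P₂) (hP₂ : 0 < P₂) (hβ₁ : 0 ≤ β₁) (hβ : β₁ < β₂) :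
    (1 - P₂ * β₂ * q) * y < (1 - P₁ * β₁ * q) * y := by
  have hPβ : P₁ * β₁ < P₂ * β₂ := mul_lt_mul' hP hβ hβ₁ hP₂
  gcongr

/-- If `P₁ ≤ P₂`, the larger `β` would give the smaller argument of `p`, hence `P₂ < P₁`. -/
theorem stmt13_general
    (p : ℝ → ℝ)
    (hmono : StrictMonoOn p (Icc 0 1))
    (hmap : ∀ d ∈ Icc (0:ℝ) 1, p d ∈ Ioo (0:ℝ) 1)
    (y qy : ℝ) (hy : y ∈ Ioc (0:ℝ) 1) (hqy : qy ∈ Ioc (0:ℝ) 1)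
    (β₁ β₂ P₁ P₂ : ℝ)
    (hβ₁ : β₁ ∈ Icc (0:ℝ) 1) (hβ₂ : β₂ ∈ Icc (0:ℝ) 1) (hββ : β₁ < β₂)
    (hP₁mem : P₁ ∈ Icc (0:ℝ) 1) (hP₂mem : P₂ ∈ Icc (0:ℝ) 1)
    (hP₁ : P₁ = p ((1 - P₁ * β₁ * qy) * y))
    (hP₂ : P₂ = p ((1 - P₂ * β₂ * qy) * y)) :
    P₂ < P₁ := by
  by_contra! hle
  have hy' := Ioc_subset_Icc_self hy
  have hqy' := Ioc_subset_Icc_self hqy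
  have h₁ := one_sub_mul_mul_mul_mem_unitInterval hP₁mem hβ₁ hqy' hy'
  have h₂ := one_sub_mul_mul_mul_mem_unitInterval hP₂mem hβ₂ hqy' hy'
  have hP₂pos : 0 < P₂ := hP₂ ▸ (hmap _ h₂).1
  have hlt := hmono h₂ h₁ (one_sub_mul_mul_mul_lt hqy.1 hy.1 hle hP₂pos hβ₁.1 hββ)
  rw [← hP₁, ← hP₂] at hlt
  exact hlt.not_ge hle

/-- The regime-(R5) equilibrium accident probability, i.e. the solution of
`P = p ((1 - P*β*q(y)) * y)`, is strictly decreasing in the signal quality `β`. -/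
theorem stmt13
    (p : ℝ → ℝ)
    (hmono : StrictMonoOn p (Icc 0 1))
    (hcont : ContinuousOn p (Icc 0 1))
    (hmap : ∀ d ∈ Icc (0:ℝ) 1, p d ∈ Ioo (0:ℝ) 1)
    (r y qy : ℝ) (hr : 1 < r) (hy : y ∈ Ioc (0:ℝ) 1) (hqy : qy ∈ Ioc (0:ℝ) 1)
    (β₁ β₂ P₁ P₂ : ℝ)
    (hβ₁ : β₁ ∈ Icc (0:ℝ) 1) (hβ₂ : β₂ ∈ Icc (0:ℝ) 1) (hββ : β₁ < β₂)
    (hP₁mem : P₁ ∈ Icc (0:ℝ) 1) (hP₂mem : P₂ ∈ Icc (0:ℝ) 1)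
    (hP₁ : P₁ = p ((1 - P₁ * β₁ * qy) * y))
    (hP₂ : P₂ = p ((1 - P₂ * β₂ * qy) * y)) :
    P₂ < P₁ :=
  stmt13_general p hmono hmap y qy hy hqy β₁ β₂ P₁ P₂ hβ₁ hβ₂ hββ hP₁mem hP₂mem hP₁ hP₂
end

section
/- Let r > 1, y ∈ [0,1], q(y) ∈ [0,1]. Define F : [0,1] → ℝ by F(β) = P(β) where P(β) is the paper's equilibrium accident probability function: F is weakly increasing on the set of β where 1/(1 + r(1 - β q(y))) ≤ p((1 - β q(y)/(1 + r(1 - β q(y))))·y) (regimes R3 ∪ R4, where F(β) = max(p(0), 1/(1 + r(1 - β q(y))))), and weakly decreasing on its complement. Consequently, min over β ∈ [0,1] of F(β) is attained at β = 0 or at β = 1. -/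
/-!
On the regimes R3 ∪ R4 the accident probability is `max (p 0) (1 / (1 + r (1 - β q)))`,
which increases with `β`. On the other regimes it is either the constant `1 / (1 + r)` or a
fixed point `P = p (φ (P β))` with `φ` decreasing; such fixed points decrease in `β`, and they lie
above `1 / (1 + r)` in R5 and below it in R1, while R5 precedes R2 which precedes R1 as `β` grows.
Since R3 ∪ R4 is an initial segment of `[0, 1]`, the accident probability is valley-shaped in `β`,
so it is minimal at an endpoint.
-/

open Set

theorem isMinOn_left_or_right_of_monotoneOn_antitoneOn {α β : Type*} [LinearOrder α]
    [LinearOrder β] {f : α → β} {a b : α} {P : α → Prop}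
    (hP : ∀ x ∈ Icc a b, ∀ y ∈ Icc a b, x ≤ y → P y → P x)
    (hmono : MonotoneOn f {x ∈ Icc a b | P x})
    (hanti : AntitoneOn f (Icc a b \ {x ∈ Icc a b | P x})) :
    IsMinOn f (Icc a b) a ∨ IsMinOn f (Icc a b) b := by
  have key : ∀ x ∈ Icc a b, f a ≤ f x ∨ f b ≤ f x := by
    intro x hx
    have ha : a ∈ Icc a b := left_mem_Icc.2 (hx.1.trans hx.2)
    have hb : b ∈ Icc a b := right_mem_Icc.2 (hx.1.trans hx.2)
    by_cases hPx : P x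
    · exact .inl (hmono ⟨ha, hP a ha x hx hx.1 hPx⟩ ⟨hx, hPx⟩ hx.1)
    · exact .inr (hanti ⟨hx, fun h => hPx h.2⟩
        ⟨hb, fun h => hPx (hP x hx b hb hx.2 h.2)⟩ hx.2)
  rcases le_total (f a) (f b) with h | h
  · exact .inl (isMinOn_iff.2 fun x hx => (key x hx).elim id h.trans)
  · exact .inr (isMinOn_iff.2 fun x hx => (key x hx).elim h.trans id)

/-- Comparison principle for fixed points of `P ↦ G (P * β)`, a map antitone in both `P`
and `β`. -/
theorem AntitoneOn.le_of_le_apply_mul {α : Type*} [Semiring α] [LinearOrder α]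
    [IsOrderedRing α] {G : α → α} {s : Set α} (hG : AntitoneOn G s) {a b P Q : α}
    (ha : 0 ≤ a) (hab : a ≤ b) (hQ : 0 ≤ Q) (hPa : P * a ∈ s) (hQb : Q * b ∈ s)
    (hP : G (P * a) ≤ P) (hQG : Q ≤ G (Q * b)) : Q ≤ P := by
  by_contra! hPQ
  exact (hQG.trans ((hG hPa hQb (mul_le_mul hPQ.le hab ha hQ)).trans hP)).not_gt hPQ

section AccidentProbability

variable {p F : ℝ → ℝ} {r y qy : ℝ}

theorem one_le_one_add_mul_one_sub_mul (hr : 0 ≤ r) (hqy : qy ∈ Icc (0:ℝ) 1) {β : ℝ}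
    (hβ : β ∈ Icc (0:ℝ) 1) : 1 ≤ 1 + r * (1 - β * qy) := by
  have : β * qy ≤ 1 := mul_le_one₀ hβ.2 hqy.1 hqy.2
  nlinarith

theorem monotoneOn_one_div_one_add_mul_one_sub_mul (hr : 0 ≤ r) (hqy : qy ∈ Icc (0:ℝ) 1) :
    MonotoneOn (fun β => 1 / (1 + r * (1 - β * qy))) (Icc 0 1) := by
  intro a _ b hb hab
  have := one_le_one_add_mul_one_sub_mul hr hqy hb
  have := hqy.1
  dsimp only
  gcongr

theorem antitoneOn_apply_one_sub_div_mul (hr : 0 ≤ r) (hy : y ∈ Icc (0:ℝ) 1)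
    (hqy : qy ∈ Icc (0:ℝ) 1) (hp : MonotoneOn p (Icc 0 1)) :
    AntitoneOn (fun β => p ((1 - β * qy / (1 + r * (1 - β * qy))) * y)) (Icc 0 1) := by
  have hD := fun β (hβ : β ∈ Icc (0:ℝ) 1) => one_le_one_add_mul_one_sub_mul hr hqy hβ
  refine hp.comp_AntitoneOn (fun a ha b hb hab => ?_) (fun β hβ => ?_)
  · have := hD b hb
    have : 0 ≤ b * qy := mul_nonneg hb.1 hqy.1
    gcongr <;> nlinarith [hy.1, hqy.1]
  · refine unitInterval.mul_mem (Icc.mem_iff_one_sub_mem.mp (unitInterval.div_mem ?_ ?_ ?_)) hy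
    · exact mul_nonneg hβ.1 hqy.1
    · linarith [hD β hβ]
    · linarith [hD β hβ, mul_le_one₀ hβ.2 hqy.1 hqy.2]

theorem regimes_R3_R4_condition_of_le (hr : 0 ≤ r) (hy : y ∈ Icc (0:ℝ) 1)
    (hqy : qy ∈ Icc (0:ℝ) 1) (hp : MonotoneOn p (Icc 0 1)) :
    ∀ a ∈ Icc (0:ℝ) 1, ∀ b ∈ Icc (0:ℝ) 1, a ≤ b →
      1 / (1 + r * (1 - b * qy)) ≤ p ((1 - b * qy / (1 + r * (1 - b * qy))) * y) →
      1 / (1 + r * (1 - a * qy)) ≤ p ((1 - a * qy / (1 + r * (1 - a * qy))) * y) :=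
  fun _ ha _ hb hab h =>
    (monotoneOn_one_div_one_add_mul_one_sub_mul hr hqy ha hb hab).trans
      (h.trans (antitoneOn_apply_one_sub_div_mul hr hy hqy hp ha hb hab))

theorem monotoneOn_of_regimes_R3_R4 (hr : 0 ≤ r) (hqy : qy ∈ Icc (0:ℝ) 1)
    (hR3 : ∀ β ∈ Icc (0:ℝ) 1,
      1 / (1 + r * (1 - β * qy)) < p 0 → F β = p 0)
    (hR4 : ∀ β ∈ Icc (0:ℝ) 1,
      p 0 ≤ 1 / (1 + r * (1 - β * qy)) →
      1 / (1 + r * (1 - β * qy)) ≤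
        p ((1 - β * qy / (1 + r * (1 - β * qy))) * y) →
      F β = 1 / (1 + r * (1 - β * qy))) :
    MonotoneOn F {β ∈ Icc (0:ℝ) 1 |
        1 / (1 + r * (1 - β * qy)) ≤
          p ((1 - β * qy / (1 + r * (1 - β * qy))) * y)} := by
  have hF : ∀ β ∈ {β ∈ Icc (0:ℝ) 1 |
      1 / (1 + r * (1 - β * qy)) ≤ p ((1 - β * qy / (1 + r * (1 - β * qy))) * y)},
      F β = max (p 0) (1 / (1 + r * (1 - β * qy))) := by
    rintro β ⟨hβ, hA⟩
    rcases lt_or_ge (1 / (1 + r * (1 - β * qy))) (p 0) with h | h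
    · rw [hR3 β hβ h, max_eq_left h.le]
    · rw [hR4 β hβ h hA, max_eq_right h]
  intro a ha b hb hab
  rw [hF a ha, hF b hb]
  exact max_le_max le_rfl (monotoneOn_one_div_one_add_mul_one_sub_mul hr hqy ha.1 hb.1 hab)

theorem antitoneOn_apply_one_sub_mul_mul (hy : y ∈ Icc (0:ℝ) 1) (hqy : qy ∈ Icc (0:ℝ) 1)
    (hp : MonotoneOn p (Icc 0 1)) :
    AntitoneOn (fun t => p ((1 - t * qy) * y)) (Icc 0 1) := by
  refine hp.comp_AntitoneOn (fun _ _ _ _ hab => ?_) (fun t ht => ?_)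
  · have := hqy.1
    have := hy.1
    gcongr
  · exact unitInterval.mul_mem
      (Icc.mem_iff_one_sub_mem.mp (unitInterval.mul_mem ht hqy)) hy

theorem antitoneOn_apply_one_sub_mul_mul_mul (hy : y ∈ Icc (0:ℝ) 1)
    (hqy : qy ∈ Icc (0:ℝ) 1) (hp : MonotoneOn p (Icc 0 1)) :
    AntitoneOn (fun t => p (1 - t * qy * y)) (Icc 0 1) := by
  refine hp.comp_AntitoneOn (fun _ _ _ _ hab => ?_) (fun t ht => ?_)
  · have := hqy.1
    have := hy.1
    gcongr
  · exact Icc.mem_iff_one_sub_mem.mp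
      (unitInterval.mul_mem (unitInterval.mul_mem ht hqy) hy)

theorem antitoneOn_of_regimes_R1_R2_R5 (hr : 0 ≤ r) (hy : y ∈ Icc (0:ℝ) 1)
    (hqy : qy ∈ Icc (0:ℝ) 1) (hp : MonotoneOn p (Icc 0 1))
    (hFmem : ∀ β ∈ Icc (0:ℝ) 1, F β ∈ Icc (0:ℝ) 1)
    (hR2 : ∀ β ∈ Icc (0:ℝ) 1,
      p ((1 - β * qy / (1 + r)) * y) ≤ 1 / (1 + r) →
      1 / (1 + r) ≤ p (1 - β * qy / (1 + r) * y) →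
      F β = 1 / (1 + r))
    (hR1 : ∀ β ∈ Icc (0:ℝ) 1,
      p (1 - β * qy / (1 + r) * y) < 1 / (1 + r) →
      F β = p (1 - F β * β * qy * y))
    (hR5 : ∀ β ∈ Icc (0:ℝ) 1,
      p ((1 - β * qy / (1 + r * (1 - β * qy))) * y) < 1 / (1 + r * (1 - β * qy)) →
      1 / (1 + r) < p ((1 - β * qy / (1 + r)) * y) →
      F β = p ((1 - F β * β * qy) * y)) :
    AntitoneOn F (Icc (0:ℝ) 1 \ {β ∈ Icc (0:ℝ) 1 |
        1 / (1 + r * (1 - β * qy)) ≤ p ((1 - β * qy / (1 + r * (1 - β * qy))) * y)}) := by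
  set c := 1 / (1 + r)
  set G₅ := fun t => p ((1 - t * qy) * y)
  set G₁ := fun t => p (1 - t * qy * y)
  have hG₅ : AntitoneOn G₅ (Icc 0 1) := antitoneOn_apply_one_sub_mul_mul hy hqy hp
  have hG₁ : AntitoneOn G₁ (Icc 0 1) := antitoneOn_apply_one_sub_mul_mul_mul hy hqy hp
  have hc : c ∈ Icc (0:ℝ) 1 := unitInterval.div_mem zero_le_one (by linarith) (by linarith)
  have hcβ : ∀ β ∈ Icc (0:ℝ) 1, c * β ∈ Icc (0:ℝ) 1 := fun β hβ => unitInterval.mul_mem hc hβ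
  have hFβ : ∀ β ∈ Icc (0:ℝ) 1, F β * β ∈ Icc (0:ℝ) 1 :=
    fun β hβ => unitInterval.mul_mem (hFmem β hβ) hβ
  have hx₅ : ∀ β, p ((1 - β * qy / (1 + r)) * y) = G₅ (c * β) := fun β => by
    simp only [G₅, c]; ring_nf
  have hx₁ : ∀ β, p (1 - β * qy / (1 + r) * y) = G₁ (c * β) := fun β => by
    simp only [G₁, c]; ring_nf
  have hR₁ : ∀ β ∈ Icc (0:ℝ) 1, G₁ (c * β) < c → F β = G₁ (F β * β) :=
    fun β hβ h => hR1 β hβ (by rwa [hx₁])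
  have hle : ∀ β ∈ Icc (0:ℝ) 1, G₅ (c * β) ≤ c → F β ≤ c := by
    intro β hβ h₅
    rcases le_or_gt c (G₁ (c * β)) with h₂ | h₁
    · exact (hR2 β hβ (by rwa [hx₅]) (by rwa [hx₁])).le
    · exact hG₁.le_of_le_apply_mul hβ.1 le_rfl (hFmem β hβ).1 (hcβ β hβ) (hFβ β hβ) h₁.le
        (hR₁ β hβ h₁).le
  rintro a ⟨ha, hAa⟩ b ⟨hb, hAb⟩ hab
  have hBa := not_le.1 fun h => hAa ⟨ha, h⟩
  have hBb := not_le.1 fun h => hAb ⟨hb, h⟩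
  have hcab : c * a ≤ c * b := mul_le_mul_of_nonneg_left hab hc.1
  rcases lt_or_ge c (G₅ (c * a)) with h₅a | h₅a
  · have hFa : F a = G₅ (F a * a) := hR5 a ha hBa (by rwa [hx₅])
    rcases lt_or_ge c (G₅ (c * b)) with h₅b | h₅b
    · have hFb : F b = G₅ (F b * b) := hR5 b hb hBb (by rwa [hx₅])
      exact hG₅.le_of_le_apply_mul ha.1 hab (hFmem b hb).1 (hFβ a ha) (hFβ b hb) hFa.ge hFb.le
    · exact (hle b hb h₅b).trans <| hG₅.le_of_le_apply_mul ha.1 le_rfl hc.1 (hFβ a ha)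
        (hcβ a ha) hFa.ge h₅a.le
  · have h₅b : G₅ (c * b) ≤ c := (hG₅ (hcβ a ha) (hcβ b hb) hcab).trans h₅a
    rcases le_or_gt c (G₁ (c * a)) with h₂a | h₁a
    · rw [hR2 a ha (by rwa [hx₅]) (by rwa [hx₁])]
      exact hle b hb h₅b
    · have h₁b : G₁ (c * b) < c := (hG₁ (hcβ a ha) (hcβ b hb) hcab).trans_lt h₁a
      exact hG₁.le_of_le_apply_mul ha.1 hab (hFmem b hb).1 (hFβ a ha) (hFβ b hb)
        (hR₁ a ha h₁a).ge (hR₁ b hb h₁b).le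

end AccidentProbability

theorem stmt14_general
    (p : ℝ → ℝ)
    (hmono : StrictMonoOn p (Icc 0 1))
    (r y qy : ℝ) (hr : 1 < r) (hy : y ∈ Icc (0:ℝ) 1) (hqy : qy ∈ Icc (0:ℝ) 1)
    (F : ℝ → ℝ)
    (hFmem : ∀ β ∈ Icc (0:ℝ) 1, F β ∈ Icc (0:ℝ) 1)
    -- regime (R3): all careful
    (hR3 : ∀ β ∈ Icc (0:ℝ) 1,
      1 / (1 + r * (1 - β * qy)) < p 0 → F β = p 0)
    -- regime (R4): non-V2V careful, unsignaled V2V indifferent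
    (hR4 : ∀ β ∈ Icc (0:ℝ) 1,
      p 0 ≤ 1 / (1 + r * (1 - β * qy)) →
      1 / (1 + r * (1 - β * qy)) ≤
        p ((1 - β * qy / (1 + r * (1 - β * qy))) * y) →
      F β = 1 / (1 + r * (1 - β * qy)))
    -- regime (R2): non-V2V indifferent, unsignaled V2V reckless
    (hR2 : ∀ β ∈ Icc (0:ℝ) 1,
      p ((1 - β * qy / (1 + r)) * y) ≤ 1 / (1 + r) →
      1 / (1 + r) ≤ p (1 - β * qy / (1 + r) * y) →
      F β = 1 / (1 + r))
    -- regime (R1): all reckless, implicit consistency equation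
    (hR1 : ∀ β ∈ Icc (0:ℝ) 1,
      p (1 - β * qy / (1 + r) * y) < 1 / (1 + r) →
      F β = p (1 - F β * β * qy * y))
    -- regime (R5): non-V2V careful, unsignaled V2V reckless, implicit equation
    (hR5 : ∀ β ∈ Icc (0:ℝ) 1,
      p ((1 - β * qy / (1 + r * (1 - β * qy))) * y) < 1 / (1 + r * (1 - β * qy)) →
      1 / (1 + r) < p ((1 - β * qy / (1 + r)) * y) →
      F β = p ((1 - F β * β * qy) * y)) :
    MonotoneOn F {β ∈ Icc (0:ℝ) 1 |
        1 / (1 + r * (1 - β * qy)) ≤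
          p ((1 - β * qy / (1 + r * (1 - β * qy))) * y)} ∧
    AntitoneOn F (Icc (0:ℝ) 1 \ {β ∈ Icc (0:ℝ) 1 |
        1 / (1 + r * (1 - β * qy)) ≤
          p ((1 - β * qy / (1 + r * (1 - β * qy))) * y)}) ∧
    ((∀ β ∈ Icc (0:ℝ) 1, F 0 ≤ F β) ∨ (∀ β ∈ Icc (0:ℝ) 1, F 1 ≤ F β)) := by
  have hp : MonotoneOn p (Icc 0 1) := hmono.monotoneOn
  have hr₀ : 0 ≤ r := by linarith
  have hA := monotoneOn_of_regimes_R3_R4 hr₀ hqy hR3 hR4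
  have hB := antitoneOn_of_regimes_R1_R2_R5 hr₀ hy hqy hp hFmem hR2 hR1 hR5
  refine ⟨hA, hB, ?_⟩
  exact (isMinOn_left_or_right_of_monotoneOn_antitoneOn
    (regimes_R3_R4_condition_of_le hr₀ hy hqy hp) hA hB).imp isMinOn_iff.1 isMinOn_iff.1

/-- Theorem 2 of the paper. Let `F β` be the equilibrium accident probability of
the game `(β, y, r)`, characterized regime-by-regime by the paper's eq. (9):
`F β = p 0` in regime (R3), `F β = 1/(1 + r(1 - β q(y)))` in regime (R4),
`F β = 1/(1+r)` in regime (R2), and `F β` solves the implicit consistency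
equations in regimes (R1) and (R5).  Then `F` is weakly increasing on the set
`A` of `β ∈ [0,1]` where `1/(1 + r(1 - β q)) ≤ p((1 - β q/(1 + r(1 - β q))) y)`
(regimes R3 ∪ R4, where `F β = max (p 0) (1/(1 + r(1 - β q)))`), weakly
decreasing on its complement in `[0,1]`, and its minimum over `[0,1]` is
attained at `β = 0` or at `β = 1`. -/
theorem stmt14
    (p : ℝ → ℝ)
    (hmono : StrictMonoOn p (Icc 0 1))
    (hcont : ContinuousOn p (Icc 0 1))
    (hmap : ∀ d ∈ Icc (0:ℝ) 1, p d ∈ Ioo (0:ℝ) 1)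
    (r y qy : ℝ) (hr : 1 < r) (hy : y ∈ Icc (0:ℝ) 1) (hqy : qy ∈ Icc (0:ℝ) 1)
    (F : ℝ → ℝ)
    (hFmem : ∀ β ∈ Icc (0:ℝ) 1, F β ∈ Icc (0:ℝ) 1)
    -- regime (R3): all careful
    (hR3 : ∀ β ∈ Icc (0:ℝ) 1,
      1 / (1 + r * (1 - β * qy)) < p 0 → F β = p 0)
    -- regime (R4): non-V2V careful, unsignaled V2V indifferent
    (hR4 : ∀ β ∈ Icc (0:ℝ) 1,
      p 0 ≤ 1 / (1 + r * (1 - β * qy)) →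
      1 / (1 + r * (1 - β * qy)) ≤
        p ((1 - β * qy / (1 + r * (1 - β * qy))) * y) →
      F β = 1 / (1 + r * (1 - β * qy)))
    -- regime (R2): non-V2V indifferent, unsignaled V2V reckless
    (hR2 : ∀ β ∈ Icc (0:ℝ) 1,
      p ((1 - β * qy / (1 + r)) * y) ≤ 1 / (1 + r) →
      1 / (1 + r) ≤ p (1 - β * qy / (1 + r) * y) →
      F β = 1 / (1 + r))
    -- regime (R1): all reckless, implicit consistency equation
    (hR1 : ∀ β ∈ Icc (0:ℝ) 1,
      p (1 - β * qy / (1 + r) * y) < 1 / (1 + r) →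
      F β = p (1 - F β * β * qy * y))
    -- regime (R5): non-V2V careful, unsignaled V2V reckless, implicit equation
    (hR5 : ∀ β ∈ Icc (0:ℝ) 1,
      p ((1 - β * qy / (1 + r * (1 - β * qy))) * y) < 1 / (1 + r * (1 - β * qy)) →
      1 / (1 + r) < p ((1 - β * qy / (1 + r)) * y) →
      F β = p ((1 - F β * β * qy) * y)) :
    MonotoneOn F {β ∈ Icc (0:ℝ) 1 |
        1 / (1 + r * (1 - β * qy)) ≤
          p ((1 - β * qy / (1 + r * (1 - β * qy))) * y)} ∧
    AntitoneOn F (Icc (0:ℝ) 1 \ {β ∈ Icc (0:ℝ) 1 |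
        1 / (1 + r * (1 - β * qy)) ≤
          p ((1 - β * qy / (1 + r * (1 - β * qy))) * y)}) ∧
    ((∀ β ∈ Icc (0:ℝ) 1, F 0 ≤ F β) ∨ (∀ β ∈ Icc (0:ℝ) 1, F 1 ≤ F β)) :=
  stmt14_general p hmono r y qy hr hy hqy F hFmem hR3 hR4 hR2 hR1 hR5
end
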